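/- arXiv:1603.01877 — 4 statements merged into one kernel-verified Lean document; each statement's English description precedes it below -/
import Mathlib

section
/- Let g be a finite-dimensional real Lie algebra, r ≥ 1, and η an alternating r-linear form on g which is closed with respect to the Chevalley–Eilenberg differential, i.e. for all x₀, …, x_r ∈ g one has Σ_{0 ≤ i < j ≤ r} (-1)^{i+j} η([xᵢ, xⱼ], x₀, …, x̂ᵢ, …, x̂ⱼ, …, x_r) = 0 (hats denoting omitted arguments). Then the null-space N = {x ∈ g : η(x, z₁, …, z_{r-1}) = 0 for all z₁, …, z_{r-1} ∈ g} is a Lie subalgebra of g. -/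
/-!
The null space of `η` is the kernel of the contraction `x ↦ η(x, ·)`, i.e. of
`η.curryLeft`, so it is a submodule. For `x, y` in it, evaluate the closedness identity at
`(x, y, z₁, …, z_{r-1})`: every term other than `(i, j) = (0, 1)` still has `x` or `y` among
the arguments of `η` and vanishes, which leaves `-η(⁅x, y⁆, z₁, …, z_{r-1}) = 0`.
-/

theorem Fin.mem_range_succAbove_comp_succAbove {n : ℕ} {i : Fin (n + 1)} {j : Fin (n + 2)}
    (hij : i.castSucc < j) {m : Fin (n + 2)} (hi : m ≠ i.castSucc) (hj : m ≠ j) :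
    m ∈ Set.range (j.succAbove ∘ i.succAbove) := by
  obtain ⟨m', rfl⟩ := Fin.exists_succAbove_eq hj
  have : m' ≠ i := by rintro rfl; exact hi (Fin.succAbove_of_castSucc_lt _ _ hij)
  obtain ⟨m'', rfl⟩ := Fin.exists_succAbove_eq this
  exact ⟨m'', rfl⟩

namespace AlternatingMap

variable {R M N : Type*} [CommSemiring R] [AddCommMonoid M] [Module R M] [AddCommGroup N]
  [Module R N] {n : ℕ}

theorem map_eq_zero_of_curryLeft_eq_zero (f : M [⋀^Fin (n + 1)]→ₗ[R] N) {x : M}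
    (hx : f.curryLeft x = 0) {v : Fin (n + 1) → M} (hv : x ∈ Set.range v) : f v = 0 := by
  classical
  obtain ⟨k, rfl⟩ := hv
  have hperm := f.map_perm v (Equiv.swap 0 k)
  rw [← Fin.cons_self_tail (v ∘ Equiv.swap 0 k), Function.comp_apply, Equiv.swap_apply_left,
    ← Matrix.vecCons, ← curryLeft_apply_apply, hx, zero_apply] at hperm
  exact (smul_eq_zero_iff_eq _).mp hperm.symm

end AlternatingMap

section

variable {R L : Type*} [CommRing R] [LieRing L] [LieAlgebra R L] {n : ℕ}

/-- The `(i, j)` term of `dη(x₀, …, x_{n+1})`; the tuple after `⁅xᵢ, xⱼ⁆` omits `xᵢ` and `xⱼ`. -/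
def chevalleyEilenbergSummand (η : L [⋀^Fin (n + 1)]→ₗ[R] R) (x : Fin (n + 2) → L)
    (i j : Fin (n + 2)) : R :=
  if h : i < j then
    (-1 : R) ^ ((i : ℕ) + (j : ℕ)) *
      η (Fin.cons ⁅x i, x j⁆
        (x ∘ j.succAbove ∘
          (Fin.castLT i ((Fin.lt_def.mp h).trans_le (Nat.lt_succ_iff.mp j.isLt))).succAbove))
  else 0

theorem chevalleyEilenbergSummand_eq_zero (η : L [⋀^Fin (n + 1)]→ₗ[R] R) {x : Fin (n + 2) → L}
    (hx₀ : η.curryLeft (x 0) = 0) (hx₁ : η.curryLeft (x 1) = 0) {i j : Fin (n + 2)}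
    (hij : (i, j) ≠ (0, 1)) : chevalleyEilenbergSummand η x i j = 0 := by
  unfold chevalleyEilenbergSummand
  split_ifs with h
  · set i' := Fin.castLT i ((Fin.lt_def.mp h).trans_le (Nat.lt_succ_iff.mp j.isLt))
    have hi' : i'.castSucc = i := Fin.castSucc_castLT _ _
    suffices ∃ m, η.curryLeft (x m) = 0 ∧ m ≠ i ∧ m ≠ j by
      obtain ⟨m, hm, hmi, hmj⟩ := this
      obtain ⟨k, hk⟩ := Fin.mem_range_succAbove_comp_succAbove (hi' ▸ h) (hi' ▸ hmi) hmj
      refine mul_eq_zero_of_right _ (η.map_eq_zero_of_curryLeft_eq_zero hm ⟨k.succ, ?_⟩)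
      simpa using congrArg x hk
    by_cases hi : i = 0
    · subst hi
      exact ⟨1, hx₁, Fin.zero_ne_one.symm, fun h1 => hij (by rw [h1])⟩
    · exact ⟨0, hx₀, Ne.symm hi, (Fin.pos_iff_ne_zero.mp ((Fin.zero_le i).trans_lt h)).symm⟩
  · rfl

theorem chevalleyEilenbergSummand_zero_one (η : L [⋀^Fin (n + 1)]→ₗ[R] R) (x y : L)
    (z : Fin n → L) :
    chevalleyEilenbergSummand η (Fin.cons x (Fin.cons y z)) 0 1 = -η (Fin.cons ⁅x, y⁆ z) := by
  unfold chevalleyEilenbergSummand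
  rw [dif_pos Fin.zero_lt_one]
  have hz : Fin.cons x (Fin.cons y z) ∘ Fin.succAbove 1 ∘ Fin.succ = z := rfl
  simp [hz]

theorem lie_mem_ker_curryLeft_of_closed (η : L [⋀^Fin (n + 1)]→ₗ[R] R)
    (hclosed : ∀ x : Fin (n + 2) → L, ∑ i, ∑ j, chevalleyEilenbergSummand η x i j = 0) {x y : L}
    (hx : x ∈ LinearMap.ker η.curryLeft) (hy : y ∈ LinearMap.ker η.curryLeft) :
    ⁅x, y⁆ ∈ LinearMap.ker η.curryLeft := by
  rw [LinearMap.mem_ker] at *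
  ext z
  have hsum := hclosed (Fin.cons x (Fin.cons y z))
  rwa [Fintype.sum_eq_single 0 fun i hi => Finset.sum_eq_zero fun j _ =>
      chevalleyEilenbergSummand_eq_zero η hx hy (by simp [hi]),
    Fintype.sum_eq_single 1 fun j hj => chevalleyEilenbergSummand_eq_zero η hx hy (by simp [hj]),
    chevalleyEilenbergSummand_zero_one, neg_eq_zero] at hsum

end

theorem nullspace_of_closed_form_is_subalgebra_general
    (g : Type*) [LieRing g] [LieAlgebra ℝ g]
    (n : ℕ) (η : g [⋀^Fin (n + 1)]→ₗ[ℝ] ℝ)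
    (hclosed : ∀ x : Fin (n + 2) → g,
      ∑ i : Fin (n + 2), ∑ j : Fin (n + 2),
        (if h : i < j then
          (-1 : ℝ) ^ ((i : ℕ) + (j : ℕ)) *
            η (Fin.cons ⁅x i, x j⁆
              (x ∘ j.succAbove ∘
                (Fin.castLT i ((Fin.lt_def.mp h).trans_le
                  (Nat.lt_succ_iff.mp j.isLt))).succAbove))
        else 0) = 0) :
    ∃ N : LieSubalgebra ℝ g,
      (N : Set g) = {x : g | ∀ z : Fin n → g, η (Fin.cons x z) = 0} :=
  ⟨{ LinearMap.ker η.curryLeft with lie_mem' := lie_mem_ker_curryLeft_of_closed η hclosed },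
    Set.ext fun _ => AlternatingMap.ext_iff⟩

/-- Let `g` be a finite-dimensional real Lie algebra and `η` an
alternating `r`-linear form on `g` (here written with `r = n + 1`, so that `r ≥ 1`)
which is closed with respect to the Chevalley–Eilenberg differential.  Then the
null-space `N = {x | η(x, z₁, …, z_{r-1}) = 0 for all zᵢ}` is a Lie subalgebra of `g`. -/
theorem nullspace_of_closed_form_is_subalgebra
    (g : Type*) [LieRing g] [LieAlgebra ℝ g] [FiniteDimensional ℝ g]
    (n : ℕ) (η : g [⋀^Fin (n + 1)]→ₗ[ℝ] ℝ)
    (hclosed : ∀ x : Fin (n + 2) → g,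
      ∑ i : Fin (n + 2), ∑ j : Fin (n + 2),
        (if h : i < j then
          (-1 : ℝ) ^ ((i : ℕ) + (j : ℕ)) *
            η (Fin.cons ⁅x i, x j⁆
              (x ∘ j.succAbove ∘
                (Fin.castLT i ((Fin.lt_def.mp h).trans_le
                  (Nat.lt_succ_iff.mp j.isLt))).succAbove))
        else 0) = 0) :
    ∃ N : LieSubalgebra ℝ g,
      (N : Set g) = {x : g | ∀ z : Fin n → g, η (Fin.cons x z) = 0} :=
  nullspace_of_closed_form_is_subalgebra_general g n η hclosed
end

section
/- Let g be a finite-dimensional nilpotent real Lie algebra with an integrable complex structure I, and let η be a closed semipositive Hermitian form on (g, I). Assume the null-space N(η) is a holomorphic Lie subalgebra of g. Then N(η) contains g¹ + I(g¹), where g¹ = [g, g]. -/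
/-!
`h(x, y) = η(x, I y)` is a positive semidefinite symmetric form, so by Cauchy–Schwarz `N(η)` is its
kernel: a subspace, stable under `I`, along which `η` vanishes identically. An operator `A` with
`h(A z, A z) + h(A² z, z) = 0` that is nilpotent has range in this kernel, since
`h(Aᵏ⁺¹ x, Aᵏ⁺¹ x) = -h(Aᵏ⁺² x, Aᵏ x)` allows a descending induction on `k`.
Closedness and holomorphy make `ad n` skew for `h` when `n ∈ N`, so `N` is an ideal. If `w` is
central modulo `N`, integrability, closedness and the Jacobi identity show that `ad (I w)`
satisfies the same identity, hence `⁅I w, g⁆ ⊆ N`; closedness then puts `w` itself into `N`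
whenever `w = ⁅a, b⁆`. Descending the lower central series of `g` yields `[g, g] ⊆ N`, and
`I`-invariance of `N` the rest.
-/

open LieAlgebra LieModule

namespace LinearMap.BilinForm

variable {R M : Type*} [CommRing R] [LinearOrder R] [IsStrictOrderedRing R]
  [AddCommGroup M] [Module R M]

theorem range_le_ker_of_isNilpotent {B : LinearMap.BilinForm R M} (hs : ∀ x, 0 ≤ B x x)
    (hB : LinearMap.IsSymm B) {A : Module.End R M} (hA : IsNilpotent A)
    (hAB : ∀ x, B (A x) (A x) + B (A (A x)) x = 0) :
    range A ≤ ker B := by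
  obtain ⟨m, hm⟩ := hA
  suffices ∀ k ≤ m, range (A ^ (k + 1)) ≤ ker B by simpa using this 0 m.zero_le
  intro k hk
  induction hk using Nat.decreasingInduction with
  | self => simp [pow_succ, hm]
  | of_succ k _ ih =>
    rintro _ ⟨x, rfl⟩
    have hker : A (A ((A ^ k) x)) ∈ ker B := ih ⟨x, by simp [pow_succ', Module.End.mul_apply]⟩
    have hx := hAB ((A ^ k) x)
    rw [mem_ker.1 hker, LinearMap.zero_apply, add_zero] at hx
    rwa [← B.apply_apply_same_eq_zero_iff hs hB, pow_succ', Module.End.mul_apply]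

end LinearMap.BilinForm

theorem LieModule.lowerCentralSeries_one_le_of_forall_lie_mem {R L : Type*} [CommRing R]
    [LieRing L] [LieAlgebra R L] [LieRing.IsNilpotent L] {J : Submodule R L}
    (hJ : ∀ a b : L, (∀ t : L, ⁅t, ⁅a, b⁆⁆ ∈ J) → ⁅a, b⁆ ∈ J) :
    (lowerCentralSeries R L L 1).toSubmodule ≤ J := by
  obtain ⟨m, hm⟩ := IsNilpotent.nilpotent R L L
  suffices ∀ k ≤ m, (lowerCentralSeries R L L (k + 1)).toSubmodule ≤ J from this 0 m.zero_le
  intro k hk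
  induction hk using Nat.decreasingInduction with
  | self =>
    intro x hx
    have hx : x ∈ lowerCentralSeries R L L m := antitone_lowerCentralSeries R L L m.le_succ hx
    rw [hm, LieSubmodule.mem_bot] at hx
    exact hx ▸ J.zero_mem
  | of_succ k _ ih =>
    rw [lowerCentralSeries_succ, LieSubmodule.lieIdeal_oper_eq_linear_span', Submodule.span_le]
    rintro _ ⟨a, -, b, hb, rfl⟩
    refine hJ a b fun t => ih ?_
    rw [lowerCentralSeries_succ, lowerCentralSeries_succ]
    exact LieSubmodule.lie_mem_lie (LieSubmodule.mem_top t)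
      (LieSubmodule.lie_mem_lie (LieSubmodule.mem_top a) hb)

section Hermitian

variable {V : Type*} [AddCommGroup V] [Module ℝ V]

structure IsSemipositiveHermitian (I : V →ₗ[ℝ] V) (η : V →ₗ[ℝ] V →ₗ[ℝ] ℝ) : Prop where
  map_map_eq_neg : ∀ x, I (I x) = -x
  isAlt : η.IsAlt
  apply_map_map : ∀ x y, η (I x) (I y) = η x y
  apply_map_self_nonneg : ∀ x, 0 ≤ η x (I x)

def nullSpace (I : V →ₗ[ℝ] V) (η : V →ₗ[ℝ] V →ₗ[ℝ] ℝ) : Submodule ℝ V :=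
  LinearMap.ker (η.compl₂ I)

variable {I : V →ₗ[ℝ] V} {η : V →ₗ[ℝ] V →ₗ[ℝ] ℝ} {x : V}

theorem mem_nullSpace : x ∈ nullSpace I η ↔ ∀ y, η x (I y) = 0 := by
  simp [nullSpace, LinearMap.ext_iff]

namespace IsSemipositiveHermitian

theorem apply_map_comm (hη : IsSemipositiveHermitian I η) (x y : V) :
    η x (I y) = η y (I x) :=
  calc η x (I y) = η (I x) (I (I y)) := (hη.apply_map_map x (I y)).symm
    _ = -η (I x) y := by rw [hη.map_map_eq_neg, map_neg]
    _ = η y (I x) := hη.isAlt.neg _ _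

theorem map_apply (hη : IsSemipositiveHermitian I η) (x y : V) : η (I x) y = -η x (I y) := by
  rw [← hη.isAlt.neg, hη.apply_map_comm]

theorem isSymm (hη : IsSemipositiveHermitian I η) : LinearMap.IsSymm (η.compl₂ I) :=
  ⟨hη.apply_map_comm⟩

theorem apply_map_self_eq_zero_iff (hη : IsSemipositiveHermitian I η) :
    η x (I x) = 0 ↔ x ∈ nullSpace I η :=
  LinearMap.BilinForm.apply_apply_same_eq_zero_iff _ hη.apply_map_self_nonneg hη.isSymm

theorem apply_eq_zero_of_mem_left (hη : IsSemipositiveHermitian I η) (hx : x ∈ nullSpace I η)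
    (y : V) : η x y = 0 := by
  simpa [hη.map_map_eq_neg] using mem_nullSpace.1 hx (I y)

theorem apply_eq_zero_of_mem_right (hη : IsSemipositiveHermitian I η) (hx : x ∈ nullSpace I η)
    (y : V) : η y x = 0 := by
  rw [← hη.isAlt.neg, hη.apply_eq_zero_of_mem_left hx, neg_zero]

theorem map_mem_nullSpace (hη : IsSemipositiveHermitian I η) (hx : x ∈ nullSpace I η) :
    I x ∈ nullSpace I η :=
  mem_nullSpace.2 fun y => by rw [hη.apply_map_map]; exact hη.apply_eq_zero_of_mem_left hx y

end IsSemipositiveHermitian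

end Hermitian

section Lie

variable {g : Type*} [LieRing g] [LieAlgebra ℝ g]

def IsIntegrable (I : g →ₗ[ℝ] g) : Prop :=
  ∀ x y, ⁅I x, I y⁆ = ⁅x, y⁆ + I ⁅I x, y⁆ + I ⁅x, I y⁆

def IsClosedForm (η : g →ₗ[ℝ] g →ₗ[ℝ] ℝ) : Prop :=
  ∀ x y z, η ⁅x, y⁆ z + η ⁅y, z⁆ x + η ⁅z, x⁆ y = 0

variable {I : g →ₗ[ℝ] g} {η : g →ₗ[ℝ] g →ₗ[ℝ] ℝ}

theorem IsIntegrable.lie_add_map_lie_mem (hint : IsIntegrable I) {a : Submodule ℝ g}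
    (hhol : ∀ x ∈ a, ∀ y, ⁅y, x⁆ + ⁅I y, I x⁆ + I ⁅I y, x⁆ - I ⁅y, I x⁆ ∈ a) {x : g} (hx : x ∈ a)
    (y : g) : ⁅y, x⁆ + I ⁅I y, x⁆ ∈ a := by
  have h2 : ⁅y, x⁆ + ⁅I y, I x⁆ + I ⁅I y, x⁆ - I ⁅y, I x⁆ = (2 : ℝ) • (⁅y, x⁆ + I ⁅I y, x⁆) := by
    rw [hint y x, two_smul]
    abel
  rw [← a.smul_mem_iff (two_ne_zero : (2 : ℝ) ≠ 0), ← h2]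
  exact hhol x hx y

namespace IsSemipositiveHermitian

theorem apply_lie_map_eq_neg (hη : IsSemipositiveHermitian I η) (hclosed : IsClosedForm η)
    {n : g} (hn : n ∈ nullSpace I η) (hhol : ∀ y, ⁅y, n⁆ + I ⁅I y, n⁆ ∈ nullSpace I η) (x t : g) :
    η ⁅n, x⁆ (I t) = -η ⁅n, t⁆ (I x) := by
  have hmap (y t : g) : η ⁅y, n⁆ (I t) = -η ⁅I y, n⁆ t := by
    have h := mem_nullSpace.1 (hhol y) t
    rw [map_add, LinearMap.add_apply, hη.apply_map_map] at h
    linarith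
  have h := hclosed x n (I t)
  rw [hη.apply_eq_zero_of_mem_right hn, ← lie_skew n (I t), map_neg, LinearMap.neg_apply,
    ← hmap] at h
  rw [← lie_skew n x, ← lie_skew n t, map_neg, map_neg, LinearMap.neg_apply, LinearMap.neg_apply]
  linarith

theorem lie_mem_nullSpace [LieRing.IsNilpotent g] (hη : IsSemipositiveHermitian I η)
    (hclosed : IsClosedForm η) (hint : IsIntegrable I)
    (hhol : ∀ x ∈ nullSpace I η, ∀ y,
      ⁅y, x⁆ + ⁅I y, I x⁆ + I ⁅I y, x⁆ - I ⁅y, I x⁆ ∈ nullSpace I η)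
    {n : g} (hn : n ∈ nullSpace I η) (x : g) : ⁅x, n⁆ ∈ nullSpace I η := by
  have hskew := hη.apply_lie_map_eq_neg hclosed hn (hint.lie_add_map_lie_mem hhol hn)
  have hrange := LinearMap.BilinForm.range_le_ker_of_isNilpotent hη.apply_map_self_nonneg
    hη.isSymm (isNilpotent_toEnd_of_isNilpotent ℝ g g n) fun z => by
      have h := hskew z ⁅n, z⁆
      simp only [LinearMap.compl₂_apply, toEnd_apply_apply]
      linarith
  rw [← lie_skew]
  exact neg_mem (hrange ⟨x, rfl⟩)

section CentralModNullSpace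

variable {w : g}

theorem lie_map_sub_map_lie_mem (hη : IsSemipositiveHermitian I η) (hint : IsIntegrable I)
    (hw : ∀ t : g, ⁅t, w⁆ ∈ nullSpace I η) (y : g) : ⁅I y, I w⁆ - I ⁅y, I w⁆ ∈ nullSpace I η := by
  rw [hint y w, add_sub_cancel_right]
  exact add_mem (hw y) (hη.map_mem_nullSpace (hw (I y)))

theorem apply_lie_map_map (hη : IsSemipositiveHermitian I η) (hint : IsIntegrable I)
    (hw : ∀ t : g, ⁅t, w⁆ ∈ nullSpace I η) (y x : g) : η ⁅I y, I w⁆ x = η ⁅I w, y⁆ (I x) :=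
  calc η ⁅I y, I w⁆ x = η (I ⁅y, I w⁆) x := by
        rw [← sub_eq_zero, ← LinearMap.sub_apply, ← map_sub]
        exact hη.apply_eq_zero_of_mem_left (hη.lie_map_sub_map_lie_mem hint hw y) x
    _ = η ⁅I w, y⁆ (I x) := by
        rw [hη.map_apply, ← lie_skew, map_neg, LinearMap.neg_apply, neg_neg]

theorem apply_lie_map_add_apply_lie_map (hη : IsSemipositiveHermitian I η)
    (hclosed : IsClosedForm η) (hint : IsIntegrable I) (hw : ∀ t : g, ⁅t, w⁆ ∈ nullSpace I η)
    (x y : g) : η ⁅I w, x⁆ (I y) + η ⁅I w, y⁆ (I x) = η ⁅I y, x⁆ (I w) := by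
  have h := hclosed (I w) x (I y)
  rw [hη.apply_lie_map_map hint hw, ← lie_skew x (I y), map_neg, LinearMap.neg_apply] at h
  linarith

theorem apply_lie_map_comm (hη : IsSemipositiveHermitian I η) (hclosed : IsClosedForm η)
    (hint : IsIntegrable I) (hw : ∀ t : g, ⁅t, w⁆ ∈ nullSpace I η) (x y : g) :
    η ⁅I x, y⁆ (I w) = η ⁅I y, x⁆ (I w) := by
  have hmap (x y : g) : η ⁅I w, I x⁆ (I (I y)) = η ⁅I w, x⁆ (I y) := by
    rw [hη.map_map_eq_neg, map_neg, ← lie_skew, map_neg, LinearMap.neg_apply, neg_neg,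
      hη.apply_lie_map_map hint hw]
  have h := hη.apply_lie_map_add_apply_lie_map hclosed hint hw (I x) (I y)
  rw [hmap, hmap, hη.map_map_eq_neg, neg_lie, ← lie_skew y (I x), neg_neg,
    hη.apply_lie_map_add_apply_lie_map hclosed hint hw] at h
  exact h.symm

theorem apply_lie_map_self_eq_zero (hη : IsSemipositiveHermitian I η) (hclosed : IsClosedForm η)
    (hint : IsIntegrable I) (hw : ∀ t : g, ⁅t, w⁆ ∈ nullSpace I η) (u : g) :
    η ⁅I w, u⁆ (I w) = 0 := by
  rw [hη.apply_lie_map_comm hclosed hint hw]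
  exact hη.apply_eq_zero_of_mem_left (hw (I u)) (I w)

theorem apply_lie_lie_map_eq_zero (hη : IsSemipositiveHermitian I η) (hclosed : IsClosedForm η)
    (hint : IsIntegrable I) (hideal : ∀ n ∈ nullSpace I η, ∀ x : g, ⁅x, n⁆ ∈ nullSpace I η)
    (hw : ∀ t : g, ⁅t, w⁆ ∈ nullSpace I η) (z : g) : η ⁅I z, ⁅I w, z⁆⁆ (I w) = 0 := by
  have hsplit : ⁅I z, ⁅I w, z⁆⁆ =
      ⁅⁅I z, I w⁆ - I ⁅z, I w⁆, z⁆ + ⁅I ⁅z, I w⁆, z⁆ + ⁅I w, ⁅I z, z⁆⁆ := by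
    rw [leibniz_lie, sub_lie]
    abel
  have h₁ : η ⁅⁅I z, I w⁆ - I ⁅z, I w⁆, z⁆ (I w) = 0 := by
    rw [← lie_skew]
    exact hη.apply_eq_zero_of_mem_left
      (neg_mem (hideal _ (hη.lie_map_sub_map_lie_mem hint hw z) z)) (I w)
  have h₂ : η ⁅I ⁅z, I w⁆, z⁆ (I w) = -η ⁅I z, ⁅I w, z⁆⁆ (I w) := by
    rw [hη.apply_lie_map_comm hclosed hint hw, ← lie_skew z (I w), lie_neg, map_neg,
      LinearMap.neg_apply]
  have h := congrArg (fun v => η v (I w)) hsplit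
  simp only [map_add, LinearMap.add_apply, h₁, h₂,
    hη.apply_lie_map_self_eq_zero hclosed hint hw] at h
  linarith

theorem lie_map_mem_nullSpace [LieRing.IsNilpotent g] (hη : IsSemipositiveHermitian I η)
    (hclosed : IsClosedForm η) (hint : IsIntegrable I)
    (hideal : ∀ n ∈ nullSpace I η, ∀ x : g, ⁅x, n⁆ ∈ nullSpace I η)
    (hw : ∀ t : g, ⁅t, w⁆ ∈ nullSpace I η) (x : g) : ⁅I w, x⁆ ∈ nullSpace I η := by
  refine LinearMap.BilinForm.range_le_ker_of_isNilpotent hη.apply_map_self_nonneg hη.isSymm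
    (isNilpotent_toEnd_of_isNilpotent ℝ g g (I w)) (fun z => ?_) ⟨x, rfl⟩
  have h := hη.apply_lie_map_add_apply_lie_map hclosed hint hw ⁅I w, z⁆ z
  rw [hη.apply_lie_lie_map_eq_zero hclosed hint hideal hw] at h
  simp only [LinearMap.compl₂_apply, toEnd_apply_apply]
  linarith

end CentralModNullSpace

theorem lie_mem_nullSpace_of_forall_lie_mem [LieRing.IsNilpotent g]
    (hη : IsSemipositiveHermitian I η) (hclosed : IsClosedForm η) (hint : IsIntegrable I)
    (hideal : ∀ n ∈ nullSpace I η, ∀ x : g, ⁅x, n⁆ ∈ nullSpace I η) {a b : g}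
    (hab : ∀ t : g, ⁅t, ⁅a, b⁆⁆ ∈ nullSpace I η) : ⁅a, b⁆ ∈ nullSpace I η := by
  have hmem := hη.lie_map_mem_nullSpace hclosed hint hideal hab
  have h := hclosed a b (I ⁅a, b⁆)
  rw [← lie_skew b, map_neg, LinearMap.neg_apply, hη.apply_eq_zero_of_mem_left (hmem b),
    hη.apply_eq_zero_of_mem_left (hmem a)] at h
  rw [← hη.apply_map_self_eq_zero_iff]
  linarith

end IsSemipositiveHermitian

end Lie

theorem nullspace_contains_commutator_general
    (g : Type*) [LieRing g] [LieAlgebra ℝ g]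
    [LieRing.IsNilpotent g]
    (I : g →ₗ[ℝ] g) (hI : ∀ x, I (I x) = -x)
    (hint : ∀ x y : g, ⁅I x, I y⁆ = ⁅x, y⁆ + I ⁅I x, y⁆ + I ⁅x, I y⁆)
    (η : g →ₗ[ℝ] g →ₗ[ℝ] ℝ) (halt : ∀ x, η x x = 0)
    (hinv : ∀ x y, η (I x) (I y) = η x y)
    (hpos : ∀ x, 0 ≤ η x (I x))
    (hclosed : ∀ x y z : g, η ⁅x, y⁆ z + η ⁅y, z⁆ x + η ⁅z, x⁆ y = 0)
    (N : Set g) (hN : N = {x : g | η x (I x) = 0})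
    -- `N(η)` is `I`-invariant and holomorphic:
    (hNhol : ∀ x ∈ N, ∀ y : g,
      ⁅y, x⁆ + ⁅I y, I x⁆ + I ⁅I y, x⁆ - I ⁅y, I x⁆ ∈ N) :
    ∀ x : g,
      x ∈ ((LieAlgebra.derivedSeries ℝ g 1).toSubmodule ⊔
           ((LieAlgebra.derivedSeries ℝ g 1).toSubmodule.map I) : Submodule ℝ g) →
      x ∈ N := by
  have hη : IsSemipositiveHermitian I η := ⟨hI, halt, hinv, hpos⟩
  obtain rfl : N = nullSpace I η := by
    ext x
    rw [hN]
    exact hη.apply_map_self_eq_zero_iff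
  have hideal := fun n (hn : n ∈ nullSpace I η) x => hη.lie_mem_nullSpace hclosed hint hNhol hn x
  have hcomm : (derivedSeries ℝ g 1).toSubmodule ≤ nullSpace I η :=
    ((LieSubmodule.toSubmodule_le_toSubmodule _ _).2
      (derivedSeries_le_lowerCentralSeries ℝ g 1)).trans
      (lowerCentralSeries_one_le_of_forall_lie_mem fun _ _ =>
        hη.lie_mem_nullSpace_of_forall_lie_mem hclosed hint hideal)
  intro x hx
  refine sup_le hcomm ?_ hx
  exact Submodule.map_le_iff_le_comap.2 fun _ hy => hη.map_mem_nullSpace (hcomm hy)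

/-- Let `g` be a finite-dimensional nilpotent real Lie algebra with an
integrable complex structure `I`, and `η` a closed semipositive Hermitian form on `(g, I)`.
Assume the null-space `N(η)` is a holomorphic Lie subalgebra of `g`.  Then `N(η)` contains
`g¹ + I(g¹)`, where `g¹ = [g, g]`. -/
theorem nullspace_contains_commutator
    (g : Type*) [LieRing g] [LieAlgebra ℝ g] [FiniteDimensional ℝ g]
    [LieRing.IsNilpotent g]
    (I : g →ₗ[ℝ] g) (hI : ∀ x, I (I x) = -x)
    (hint : ∀ x y : g, ⁅I x, I y⁆ = ⁅x, y⁆ + I ⁅I x, y⁆ + I ⁅x, I y⁆)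
    (η : g →ₗ[ℝ] g →ₗ[ℝ] ℝ) (halt : ∀ x, η x x = 0)
    (hinv : ∀ x y, η (I x) (I y) = η x y)
    (hpos : ∀ x, 0 ≤ η x (I x))
    (hclosed : ∀ x y z : g, η ⁅x, y⁆ z + η ⁅y, z⁆ x + η ⁅z, x⁆ y = 0)
    (N : Set g) (hN : N = {x : g | η x (I x) = 0})
    -- `N(η)` is a Lie subalgebra:
    (hNadd : ∀ x ∈ N, ∀ y ∈ N, x + y ∈ N)
    (hNsmul : ∀ (c : ℝ), ∀ x ∈ N, c • x ∈ N)
    (hNbra : ∀ x ∈ N, ∀ y ∈ N, ⁅x, y⁆ ∈ N)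
    -- `N(η)` is `I`-invariant and holomorphic:
    (hNI : ∀ x ∈ N, I x ∈ N)
    (hNhol : ∀ x ∈ N, ∀ y : g,
      ⁅y, x⁆ + ⁅I y, I x⁆ + I ⁅I y, x⁆ - I ⁅y, I x⁆ ∈ N) :
    ∀ x : g,
      x ∈ ((LieAlgebra.derivedSeries ℝ g 1).toSubmodule ⊔
           ((LieAlgebra.derivedSeries ℝ g 1).toSubmodule.map I) : Submodule ℝ g) →
      x ∈ N :=
  nullspace_contains_commutator_general g I hI hint η halt hinv hpos hclosed N hN hNhol
end

section
/- Let g be a finite-dimensional nilpotent real Lie algebra with an integrable complex structure I, and let η be a closed semipositive Hermitian form on (g, I). Assume the null-space N(η) is a holomorphic Lie subalgebra of g. Then N(η) is an ideal of g, i.e. [y, x] ∈ N(η) for every x ∈ N(η) and every y ∈ g. -/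
/-!
Semipositivity makes `N(η)` the radical `ker η` of `η`. For `x` in the radical, closedness of `η`
makes `(y, z) ↦ η ⁅x, y⁆ z` symmetric, while holomorphy and integrability give
`⁅I z, x⁆ ≡ I ⁅z, x⁆` modulo the radical; together, `ad x` is skew-adjoint for the Hermitian form
`h(u, v) = η u (I v)`. Hence `h(⁅x, y⁆, ⁅x, y⁆) = -h(⁅x, ⁅x, y⁆⁆, y)`, so `⁅x, ⁅x, y⁆⁆ ∈ N(η)` forces
`⁅x, y⁆ ∈ N(η)`, and a descending induction along the nilpotent operator `ad x` concludes.
-/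

theorem Module.End.apply_mem_of_isNilpotent {R M : Type*} [Semiring R] [AddCommMonoid M]
    [Module R M] {T : Module.End R M} (hT : IsNilpotent T) {P : Submodule R M}
    (hstep : ∀ y, T (T y) ∈ P → T y ∈ P) (y : M) : T y ∈ P := by
  obtain ⟨n, hn⟩ := hT
  have hpow : ∀ k y, (T ^ (k + 1)) y ∈ P → T y ∈ P := by
    intro k
    induction k with
    | zero => simp
    | succ k ih =>
      intro y hy
      refine hstep y (ih (T y) ?_)
      rwa [← Module.End.mul_apply, ← pow_succ]
  refine hpow n y ?_
  rw [pow_succ, Module.End.mul_apply, hn, LinearMap.zero_apply]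
  exact P.zero_mem

section ComplexStructure

variable {R V : Type*} [CommRing R] [AddCommGroup V] [Module R V]
  {η : V →ₗ[R] V →ₗ[R] R} {I : V →ₗ[R] V}

theorem apply_I_left_eq_neg (hI : ∀ x, I (I x) = -x) (hinv : ∀ x y, η (I x) (I y) = η x y)
    (u v : V) : η (I u) v = -η u (I v) := by
  rw [← hinv u (I v), hI, map_neg, neg_neg]

theorem isSymm_compl₂_I (hη : η.IsAlt) (hI : ∀ x, I (I x) = -x)
    (hinv : ∀ x y, η (I x) (I y) = η x y) : (η.compl₂ I).IsSymm := by
  refine LinearMap.isSymm_def.mpr fun u v => ?_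
  simp only [LinearMap.compl₂_apply, RingHom.id_apply]
  rw [← hη.neg, apply_I_left_eq_neg hI hinv, neg_neg]

end ComplexStructure

section OrderedField

variable {K V : Type*} [Field K] [LinearOrder K] [IsStrictOrderedRing K]
  [AddCommGroup V] [Module K V]

theorem LinearMap.IsPosSemidef.apply_eq_zero_of_apply_self_eq_zero {B : V →ₗ[K] V →ₗ[K] K}
    (hB : B.IsPosSemidef) {u : V} (hu : B u u = 0) (w : V) : B u w = 0 := by
  have hsymm : B w u = B u w := (hB.isSymm.eq u w).symm
  have hquad : ∀ t : K, 0 ≤ B w w * (t * t) + 2 * B u w * t + 0 := fun t => by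
    have := hB.isNonneg.nonneg (u + t • w)
    simp only [map_add, map_smul, LinearMap.add_apply, LinearMap.smul_apply, smul_eq_mul, hu,
      hsymm] at this
    linarith
  have hdisc := discrim_le_zero hquad
  rw [discrim] at hdisc
  exact pow_eq_zero_iff two_ne_zero |>.mp (by nlinarith [sq_nonneg (B u w)])

theorem mem_ker_iff_apply_I_self_eq_zero {η : V →ₗ[K] V →ₗ[K] K} {I : V →ₗ[K] V}
    (hη : η.IsAlt) (hI : ∀ x, I (I x) = -x) (hinv : ∀ x y, η (I x) (I y) = η x y)
    (hpos : ∀ x, 0 ≤ η x (I x)) {u : V} : u ∈ LinearMap.ker η ↔ η u (I u) = 0 := by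
  refine ⟨fun hu => by rw [LinearMap.mem_ker.mp hu, LinearMap.zero_apply], fun hu => ?_⟩
  have hB : (η.compl₂ I).IsPosSemidef := ⟨isSymm_compl₂_I hη hI hinv, ⟨hpos⟩⟩
  refine LinearMap.mem_ker.mpr (LinearMap.ext fun z => ?_)
  simpa [hI] using hB.apply_eq_zero_of_apply_self_eq_zero hu (-I z)

end OrderedField

section LieAlgebra

variable {R L : Type*} [CommRing R] [LieRing L] [LieAlgebra R L]
  {η : L →ₗ[R] L →ₗ[R] R} {I : L →ₗ[R] L}

theorem holomorphic_expr_eq_two_smul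
    (hint : ∀ x y : L, ⁅I x, I y⁆ = ⁅x, y⁆ + I ⁅I x, y⁆ + I ⁅x, I y⁆) (x y : L) :
    ⁅y, x⁆ + ⁅I y, I x⁆ + I ⁅I y, x⁆ - I ⁅y, I x⁆ = (2 : R) • (⁅y, x⁆ + I ⁅I y, x⁆) := by
  rw [hint]
  module

theorem lie_I_sub_I_lie_mem [Invertible (2 : R)] {P : Submodule R L} (hI : ∀ x, I (I x) = -x)
    (hint : ∀ x y : L, ⁅I x, I y⁆ = ⁅x, y⁆ + I ⁅I x, y⁆ + I ⁅x, I y⁆) {x : L}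
    (hhol : ∀ y, ⁅y, x⁆ + ⁅I y, I x⁆ + I ⁅I y, x⁆ - I ⁅y, I x⁆ ∈ P) (z : L) :
    ⁅I z, x⁆ - I ⁅z, x⁆ ∈ P := by
  have h := P.smul_mem (⅟2 : R) (hhol (I z))
  rwa [holomorphic_expr_eq_two_smul hint, smul_smul, invOf_mul_self, one_smul, hI, neg_lie,
    map_neg, ← sub_eq_add_neg] at h

theorem apply_lie_comm_of_mem_ker (hη : η.IsAlt)
    (hclosed : ∀ x y z : L, η ⁅x, y⁆ z + η ⁅y, z⁆ x + η ⁅z, x⁆ y = 0)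
    {x : L} (hx : x ∈ LinearMap.ker η) (y z : L) : η ⁅x, y⁆ z = η ⁅x, z⁆ y := by
  have h := hclosed x y z
  rw [← hη.neg x, LinearMap.mem_ker.mp hx, ← lie_skew z x] at h
  simp only [LinearMap.zero_apply, neg_zero, add_zero, map_neg, LinearMap.neg_apply] at h
  linear_combination h

theorem apply_lie_I_eq_neg (hη : η.IsAlt) (hI : ∀ x, I (I x) = -x)
    (hinv : ∀ x y, η (I x) (I y) = η x y)
    (hclosed : ∀ x y z : L, η ⁅x, y⁆ z + η ⁅y, z⁆ x + η ⁅z, x⁆ y = 0)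
    {x : L} (hx : x ∈ LinearMap.ker η) {y z : L}
    (hcomm : ⁅I z, x⁆ - I ⁅z, x⁆ ∈ LinearMap.ker η) :
    η ⁅x, y⁆ (I z) = -η ⁅x, z⁆ (I y) := by
  have hIz : η ⁅I z, x⁆ y = η (I ⁅z, x⁆) y := by
    simpa [sub_eq_zero] using congrArg (· y) (LinearMap.mem_ker.mp hcomm)
  rw [apply_lie_comm_of_mem_ker hη hclosed hx, ← lie_skew, map_neg, LinearMap.neg_apply, hIz,
    apply_I_left_eq_neg hI hinv, ← lie_skew, map_neg, LinearMap.neg_apply, neg_neg]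

end LieAlgebra

theorem nullspace_is_ideal_general
    (g : Type*) [LieRing g] [LieAlgebra ℝ g]
    [LieRing.IsNilpotent g]
    (I : g →ₗ[ℝ] g) (hI : ∀ x, I (I x) = -x)
    (hint : ∀ x y : g, ⁅I x, I y⁆ = ⁅x, y⁆ + I ⁅I x, y⁆ + I ⁅x, I y⁆)
    (η : g →ₗ[ℝ] g →ₗ[ℝ] ℝ) (halt : ∀ x, η x x = 0)
    (hinv : ∀ x y, η (I x) (I y) = η x y)
    (hpos : ∀ x, 0 ≤ η x (I x))
    (hclosed : ∀ x y z : g, η ⁅x, y⁆ z + η ⁅y, z⁆ x + η ⁅z, x⁆ y = 0)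
    (N : Set g) (hN : N = {x : g | η x (I x) = 0})
    -- `N(η)` is `I`-invariant and holomorphic:
    (hNhol : ∀ x ∈ N, ∀ y : g,
      ⁅y, x⁆ + ⁅I y, I x⁆ + I ⁅I y, x⁆ - I ⁅y, I x⁆ ∈ N) :
    ∀ x ∈ N, ∀ y : g, ⁅y, x⁆ ∈ N := by
  have hη : η.IsAlt := halt
  obtain rfl : N = LinearMap.ker η := by
    ext u
    rw [hN, Set.mem_ofPred_eq, SetLike.mem_coe, mem_ker_iff_apply_I_self_eq_zero hη hI hinv hpos]
  intro x hx y
  have hcomm := lie_I_sub_I_lie_mem hI hint (hNhol x hx)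
  have hstep : ∀ y, ⁅x, ⁅x, y⁆⁆ ∈ LinearMap.ker η → ⁅x, y⁆ ∈ LinearMap.ker η := by
    intro y hy
    rw [mem_ker_iff_apply_I_self_eq_zero hη hI hinv hpos,
      apply_lie_I_eq_neg hη hI hinv hclosed hx (hcomm _), LinearMap.mem_ker.mp hy,
      LinearMap.zero_apply, neg_zero]
  have hxy : ⁅x, y⁆ ∈ LinearMap.ker η := Module.End.apply_mem_of_isNilpotent
    (LieModule.isNilpotent_toEnd_of_isNilpotent ℝ g g x) hstep y
  rw [← lie_skew]
  exact neg_mem hxy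

theorem nullspace_is_ideal
    (g : Type*) [LieRing g] [LieAlgebra ℝ g] [FiniteDimensional ℝ g]
    [LieRing.IsNilpotent g]
    (I : g →ₗ[ℝ] g) (hI : ∀ x, I (I x) = -x)
    (hint : ∀ x y : g, ⁅I x, I y⁆ = ⁅x, y⁆ + I ⁅I x, y⁆ + I ⁅x, I y⁆)
    (η : g →ₗ[ℝ] g →ₗ[ℝ] ℝ) (halt : ∀ x, η x x = 0)
    (hinv : ∀ x y, η (I x) (I y) = η x y)
    (hpos : ∀ x, 0 ≤ η x (I x))
    (hclosed : ∀ x y z : g, η ⁅x, y⁆ z + η ⁅y, z⁆ x + η ⁅z, x⁆ y = 0)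
    (N : Set g) (hN : N = {x : g | η x (I x) = 0})
    -- `N(η)` is a Lie subalgebra:
    (hNadd : ∀ x ∈ N, ∀ y ∈ N, x + y ∈ N)
    (hNsmul : ∀ (c : ℝ), ∀ x ∈ N, c • x ∈ N)
    (hNbra : ∀ x ∈ N, ∀ y ∈ N, ⁅x, y⁆ ∈ N)
    -- `N(η)` is `I`-invariant and holomorphic:
    (hNI : ∀ x ∈ N, I x ∈ N)
    (hNhol : ∀ x ∈ N, ∀ y : g,
      ⁅y, x⁆ + ⁅I y, I x⁆ + I ⁅I y, x⁆ - I ⁅y, I x⁆ ∈ N) :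
    ∀ x ∈ N, ∀ y : g, ⁅y, x⁆ ∈ N :=
  nullspace_is_ideal_general g I hI hint η halt hinv hpos hclosed N hN hNhol
end

section
/- Let g be a finite-dimensional nilpotent real Lie algebra with an integrable complex structure I, and let η be a closed semipositive Hermitian form on (g, I) whose null-space N(η) is a holomorphic Lie subalgebra. Then for every x ∈ N(η) and all y, z ∈ g one has η([y, x], z) = -η(I[Iy, x], z). -/
/-!
The form `h(a, b) = η(a, I b)` is symmetric (η is alternating and `I`-invariant) and positive
semidefinite, so by Cauchy–Schwarz every `h`-isotropic vector lies in the kernel of `η`.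
Integrability turns the holomorphy element `[y,x] + [Iy,Ix] + I[Iy,x] - I[y,Ix]` into
`2([y,x] + I[Iy,x])`; for `x ∈ N(η)` this vector is therefore isotropic, hence `η`-null.
-/

namespace LinearMap.BilinForm

variable {R M : Type*} [CommRing R] [AddCommGroup M] [Module R M]
  {η : LinearMap.BilinForm R M} {I : M →ₗ[R] M}

theorem IsAlt.isSymm_compl₂ (hη : η.IsAlt) (hI : ∀ x, I (I x) = -x)
    (hinv : ∀ x y, η (I x) (I y) = η x y) : (η.compl₂ I).IsSymm := by
  refine ⟨fun a b => ?_⟩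
  calc η a (I b) = η (I a) (I (I b)) := (hinv a (I b)).symm
    _ = -η (I a) b := by rw [hI, map_neg]
    _ = η b (I a) := hη.neg_eq (I a) b

theorem IsAlt.apply_eq_zero_of_apply_map_self_eq_zero [LinearOrder R] [IsStrictOrderedRing R]
    (hη : η.IsAlt) (hI : ∀ x, I (I x) = -x) (hinv : ∀ x y, η (I x) (I y) = η x y)
    (hpos : ∀ x, 0 ≤ η x (I x)) {w : M} (hw : η w (I w) = 0) : η w = 0 := by
  have hker : η.compl₂ I w = 0 :=
    (apply_apply_same_eq_zero_iff _ hpos (hη.isSymm_compl₂ hI hinv)).mp hw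
  ext u
  simpa [hI] using LinearMap.congr_fun hker (-I u)

end LinearMap.BilinForm

theorem LieAlgebra.bracket_add_bracket_map_add_map_sub_map_eq_two_smul {R L : Type*} [CommRing R]
    [LieRing L] [LieAlgebra R L] {I : L →ₗ[R] L}
    (hint : ∀ x y : L, ⁅I x, I y⁆ = ⁅x, y⁆ + I ⁅I x, y⁆ + I ⁅x, I y⁆) (x y : L) :
    ⁅y, x⁆ + ⁅I y, I x⁆ + I ⁅I y, x⁆ - I ⁅y, I x⁆ = (2 : R) • (⁅y, x⁆ + I ⁅I y, x⁆) := by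
  rw [hint y x]
  module

theorem eta_bracket_skew_general
    (g : Type*) [LieRing g] [LieAlgebra ℝ g]
    (I : g →ₗ[ℝ] g) (hI : ∀ x, I (I x) = -x)
    (hint : ∀ x y : g, ⁅I x, I y⁆ = ⁅x, y⁆ + I ⁅I x, y⁆ + I ⁅x, I y⁆)
    (η : g →ₗ[ℝ] g →ₗ[ℝ] ℝ) (halt : ∀ x, η x x = 0)
    (hinv : ∀ x y, η (I x) (I y) = η x y)
    (hpos : ∀ x, 0 ≤ η x (I x))
    (N : Set g) (hN : N = {x : g | η x (I x) = 0})
    -- `N(η)` is `I`-invariant and holomorphic: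
    (hNhol : ∀ x ∈ N, ∀ y : g,
      ⁅y, x⁆ + ⁅I y, I x⁆ + I ⁅I y, x⁆ - I ⁅y, I x⁆ ∈ N) :
    ∀ x ∈ N, ∀ y z : g, η ⁅y, x⁆ z = -η (I ⁅I y, x⁆) z := by
  intro x hx y z
  have hiso := hNhol x hx y
  rw [hN, LieAlgebra.bracket_add_bracket_map_add_map_sub_map_eq_two_smul (R := ℝ) hint] at hiso
  have hnull := LinearMap.congr_fun
    (LinearMap.BilinForm.IsAlt.apply_eq_zero_of_apply_map_self_eq_zero halt hI hinv hpos hiso) z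
  simp only [map_smul, map_add, LinearMap.smul_apply, LinearMap.add_apply, LinearMap.zero_apply,
    smul_eq_mul] at hnull
  linarith

theorem eta_bracket_skew
    (g : Type*) [LieRing g] [LieAlgebra ℝ g] [FiniteDimensional ℝ g]
    [LieRing.IsNilpotent g]
    (I : g →ₗ[ℝ] g) (hI : ∀ x, I (I x) = -x)
    (hint : ∀ x y : g, ⁅I x, I y⁆ = ⁅x, y⁆ + I ⁅I x, y⁆ + I ⁅x, I y⁆)
    (η : g →ₗ[ℝ] g →ₗ[ℝ] ℝ) (halt : ∀ x, η x x = 0)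
    (hinv : ∀ x y, η (I x) (I y) = η x y)
    (hpos : ∀ x, 0 ≤ η x (I x))
    (hclosed : ∀ x y z : g, η ⁅x, y⁆ z + η ⁅y, z⁆ x + η ⁅z, x⁆ y = 0)
    (N : Set g) (hN : N = {x : g | η x (I x) = 0})
    -- `N(η)` is a Lie subalgebra:
    (hNadd : ∀ x ∈ N, ∀ y ∈ N, x + y ∈ N)
    (hNsmul : ∀ (c : ℝ), ∀ x ∈ N, c • x ∈ N)
    (hNbra : ∀ x ∈ N, ∀ y ∈ N, ⁅x, y⁆ ∈ N)
    -- `N(η)` is `I`-invariant and holomorphic: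
    (hNI : ∀ x ∈ N, I x ∈ N)
    (hNhol : ∀ x ∈ N, ∀ y : g,
      ⁅y, x⁆ + ⁅I y, I x⁆ + I ⁅I y, x⁆ - I ⁅y, I x⁆ ∈ N) :
    ∀ x ∈ N, ∀ y z : g, η ⁅y, x⁆ z = -η (I ⁅I y, x⁆) z :=
  eta_bracket_skew_general g I hI hint η halt hinv hpos N hN hNhol
end
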